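/- arXiv:2507.14607 — 3 statements merged into one kernel-verified Lean document; each statement's English description precedes it below -/
import Mathlib

section
/- For any n×n complex matrix B and any 1 ≤ k ≤ n, the hook immanant satisfies d_k(B) = Σ_{α ∈ Q_{k−1,n}} per(B[α])·det(B(α)) − d_{k−1}(B), where the sum runs over all (k−1)-element subsets α of {1,…,n}. -/
open Finset Matrix Polynomial BigOperators

variable {α : Type*} [Fintype α] [DecidableEq α]

/-- The sign of `σ` restricted to an invariant subset `S`, or `0` if `S` is not invariant. -/
def restSign (σ : Equiv.Perm α) (S : Finset α) : ℤ :=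
  if h : ∀ x, x ∈ S ↔ σ x ∈ S then Equiv.Perm.sign (σ.subtypePerm (p := fun x => x ∈ S) (fun x => (h x).symm)) else 0

/-- The trace of `σ` acting on the `r`-th exterior power of the permutation representation. -/
def extTrace (r : ℕ) (σ : Equiv.Perm α) : ℤ :=
  ∑ S ∈ Finset.univ.powersetCard r, restSign σ S

/-- `hookChar k σ` is the value `χ_{(k,1^{n-k})}(σ)` of the irreducible character of the
symmetric group on `α` (with `n = |α|`) indexed by the hook partition `(k,1^{n-k})`;
it is `0` when the partition is invalid, i.e. unless `1 ≤ k ≤ n`. -/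
def hookChar (k : ℕ) (σ : Equiv.Perm α) : ℤ :=
  if 1 ≤ k ∧ k ≤ Fintype.card α then
    ∑ r ∈ Finset.range (Fintype.card α - k + 1),
      (-1) ^ (Fintype.card α - k - r) * extTrace r σ
  else 0

/-- The hook immanant `d_{(k,1^{n-k})}(B)` of a square matrix `B`. -/
def dImm {R : Type*} [CommRing R] (k : ℕ) (B : Matrix α α R) : R :=
  ∑ σ : Equiv.Perm α, (hookChar k σ : R) * ∏ i, B i (σ i)

/-- The permanent of a square matrix. -/
def perM {R : Type*} [CommRing R] (B : Matrix α α R) : R :=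
  ∑ σ : Equiv.Perm α, ∏ i, B i (σ i)

/-- The principal submatrix of `B` with rows and columns indexed by `S`. -/
def subMat {R : Type*} (B : Matrix α α R) (S : Finset α) : Matrix S S R :=
  fun i j => B i j

/-- `B` with the `(i,j)` entry replaced by `0`. -/
def zeroEntry {R : Type*} [Zero R] (B : Matrix α α R) (i j : α) : Matrix α α R :=
  fun s t => if s = i ∧ t = j then 0 else B s t

/-- `B_{(ij)}`: keeps the `(i,j)` entry and all entries outside row `i` and column `j`,
zeroing the remaining entries of row `i` and column `j`. -/
def parenM {R : Type*} [Zero R] (B : Matrix α α R) (i j : α) : Matrix α α R :=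
  fun s t => if (s = i ∧ t = j) ∨ (s ≠ i ∧ t ≠ j) then B s t else 0

/-- `B_{[ij]}`: `B` with both the `(i,j)` and `(j,i)` entries set to `0`. -/
def brackM {R : Type*} [Zero R] (B : Matrix α α R) (i j : α) : Matrix α α R :=
  fun s t => if (s = i ∧ t = j) ∨ (s = j ∧ t = i) then 0 else B s t

/-- The hook immanantal polynomial `Φ_k(B,x) = d_{(k,1^{n-k})}(x Iₙ - B)`. -/
noncomputable def hookPoly (k : ℕ) (B : Matrix α α ℂ) : Polynomial ℂ :=
  dImm k (charmatrix B)

/-- The permanental polynomial `per(x Iₙ - B)`. -/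
noncomputable def perPoly (B : Matrix α α ℂ) : Polynomial ℂ :=
  perM (charmatrix B)

lemma inv_compl_iff (σ : Equiv.Perm α) (S : Finset α) :
    (∀ x, x ∈ Sᶜ ↔ σ x ∈ Sᶜ) ↔ (∀ x, x ∈ S ↔ σ x ∈ S) := by
  simp only [Finset.mem_compl, not_iff_not]

lemma invariant_of_mapsTo (σ : Equiv.Perm α) (S : Finset α)
    (h : ∀ x ∈ S, σ x ∈ S) : ∀ x, x ∈ S ↔ σ x ∈ S := by
  have himg : S.image σ = S := Finset.eq_of_subset_of_card_le
    (fun y hy => by obtain ⟨x, hx, rfl⟩ := Finset.mem_image.mp hy; exact h x hx)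
    (by rw [Finset.card_image_of_injective _ σ.injective])
  intro x
  refine ⟨h x, fun hx => ?_⟩
  rw [← himg] at hx
  obtain ⟨s, hs, hsx⟩ := Finset.mem_image.mp hx
  rwa [← σ.injective hsx]

lemma sum_perm_indicator (σ : Equiv.Perm α) (S : Finset α) :
    ∑ τ : Equiv.Perm α, ((Equiv.Perm.sign τ : ℤ) : ℚ) *
      ((∏ i ∈ S, if σ i = τ i then (1:ℚ) else 0) *
       ∏ i ∈ Sᶜ, if i = τ i then (1:ℚ) else 0) = (restSign σ S : ℚ) := by
  have hterm : ∀ τ : Equiv.Perm α,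
      ((∏ i ∈ S, if σ i = τ i then (1:ℚ) else 0) *
       ∏ i ∈ Sᶜ, if i = τ i then (1:ℚ) else 0)
      = if ((∀ i ∈ S, σ i = τ i) ∧ ∀ i ∈ Sᶜ, i = τ i) then 1 else 0 := by
    intro τ
    rw [Finset.prod_boole, Finset.prod_boole]
    by_cases h1 : ∀ i ∈ S, σ i = τ i
    · by_cases h2 : ∀ i ∈ Sᶜ, i = τ i
      · rw [if_pos h1, if_pos h2, if_pos ⟨h1, h2⟩, one_mul]
      · rw [if_neg h2, if_neg (fun hc : (∀ i ∈ S, σ i = τ i) ∧ (∀ i ∈ Sᶜ, i = τ i) => h2 hc.2), mul_zero]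
    · rw [if_neg h1, if_neg (fun hc : (∀ i ∈ S, σ i = τ i) ∧ (∀ i ∈ Sᶜ, i = τ i) => h1 hc.1), zero_mul]
  simp only [hterm, mul_ite, mul_one, mul_zero]
  rw [← Finset.sum_filter]
  by_cases h : ∀ x, x ∈ S ↔ σ x ∈ S
  · have hfil : Finset.univ.filter
        (fun τ : Equiv.Perm α => (∀ i ∈ S, σ i = τ i) ∧ ∀ i ∈ Sᶜ, i = τ i)
        = {Equiv.Perm.ofSubtype (σ.subtypePerm (p := fun x => x ∈ S) (fun x => (h x).symm))} := by
      ext τ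
      simp only [Finset.mem_filter, Finset.mem_univ, true_and, Finset.mem_singleton]
      constructor
      · rintro ⟨h1, h2⟩
        ext x
        by_cases hx : x ∈ S
        · rw [Equiv.Perm.ofSubtype_apply_of_mem _ hx, Equiv.Perm.subtypePerm_apply]
          exact (h1 x hx).symm
        · rw [Equiv.Perm.ofSubtype_apply_of_not_mem _ hx]
          exact (h2 x (Finset.mem_compl.mpr hx)).symm
      · rintro rfl
        constructor
        · intro i hi
          rw [Equiv.Perm.ofSubtype_apply_of_mem _ hi, Equiv.Perm.subtypePerm_apply]
        · intro i hi
          rw [Equiv.Perm.ofSubtype_apply_of_not_mem _ (Finset.mem_compl.mp hi)]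
    rw [hfil, Finset.sum_singleton, Equiv.Perm.sign_ofSubtype, restSign, dif_pos h]
  · have hfil : Finset.univ.filter
        (fun τ : Equiv.Perm α => (∀ i ∈ S, σ i = τ i) ∧ ∀ i ∈ Sᶜ, i = τ i)
        = ∅ := by
      ext τ
      simp only [Finset.mem_filter, Finset.mem_univ, true_and, Finset.notMem_empty,
        iff_false, not_and]
      intro h1 h2
      apply h
      apply invariant_of_mapsTo
      intro x hx
      by_contra hsx
      have e1 : τ (σ x) = σ x := (h2 (σ x) (Finset.mem_compl.mpr hsx)).symm
      have e2 : τ x = σ x := (h1 x hx).symm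
      have := τ.injective (e1.trans e2.symm)
      rw [this] at hsx
      exact hsx hx
    rw [hfil, Finset.sum_empty, restSign, dif_neg h, Int.cast_zero]

lemma alt_sum_restSign [Nonempty α] (σ : Equiv.Perm α) :
    ∑ S ∈ (Finset.univ : Finset α).powerset, (-1:ℤ) ^ S.card * restSign σ S = 0 := by
  have key : ∑ S ∈ (Finset.univ : Finset α).powerset,
      (-1:ℚ) ^ S.card * (restSign σ S : ℚ) = 0 := by
    set M : Matrix α α ℚ :=
      Matrix.of fun i j => (if i = j then (1:ℚ) else 0) - (if σ i = j then 1 else 0) with hM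
    have hdet0 : M.det = 0 := by
      rw [← Matrix.exists_mulVec_eq_zero_iff]
      refine ⟨fun _ => 1, ?_, ?_⟩
      · intro hc
        have := congrFun hc (Classical.arbitrary α)
        simp at this
      · funext i
        simp [Matrix.mulVec, dotProduct, hM, sub_mul, Finset.sum_sub_distrib]
    have hdet : M.det = ∑ S ∈ (Finset.univ : Finset α).powerset,
        (-1:ℚ) ^ S.card * (restSign σ S : ℚ) := by
      have h1 : M.det = ∑ τ : Equiv.Perm α, ((Equiv.Perm.sign τ : ℤ) : ℚ) * ∏ i, M i (τ i) := by
        rw [← Matrix.det_transpose, Matrix.det_apply']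
        simp only [Matrix.transpose_apply]
      rw [h1]
      have h2 : ∀ τ : Equiv.Perm α, (∏ i, M i (τ i))
          = ∑ S ∈ (Finset.univ : Finset α).powerset,
              (-1:ℚ) ^ S.card * ((∏ i ∈ S, if σ i = τ i then (1:ℚ) else 0) *
                ∏ i ∈ Sᶜ, if i = τ i then (1:ℚ) else 0) := by
        intro τ
        have hMe : ∀ i, M i (τ i)
            = (-(if σ i = τ i then (1:ℚ) else 0)) + (if i = τ i then (1:ℚ) else 0) := by
          intro i
          show (if i = τ i then (1:ℚ) else 0) - (if σ i = τ i then 1 else 0) = _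
          ring
        rw [Finset.prod_congr rfl (fun i _ => hMe i), Finset.prod_add]
        refine Finset.sum_congr rfl fun S _ => ?_
        have hneg : ∏ i ∈ S, (-(if σ i = τ i then (1:ℚ) else 0))
            = (-1:ℚ) ^ S.card * ∏ i ∈ S, (if σ i = τ i then (1:ℚ) else 0) := by
          rw [← Finset.prod_const, ← Finset.prod_mul_distrib]
          exact Finset.prod_congr rfl fun i _ => (neg_one_mul _).symm
        rw [hneg, ← Finset.compl_eq_univ_sdiff, mul_assoc]
      rw [Finset.sum_congr rfl fun τ _ => by rw [h2 τ, Finset.mul_sum]]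
      rw [Finset.sum_comm]
      refine Finset.sum_congr rfl fun S _ => ?_
      rw [← sum_perm_indicator σ S, Finset.mul_sum]
      exact Finset.sum_congr rfl fun τ _ => by ring
    exact hdet.symm.trans hdet0
  exact_mod_cast key

lemma alt_sum_extTrace [Nonempty α] (σ : Equiv.Perm α) :
    ∑ r ∈ Finset.range (Fintype.card α + 1), (-1:ℤ) ^ r * extTrace r σ = 0 := by
  have h := alt_sum_restSign σ
  rw [Finset.powerset_card_biUnion, Finset.sum_biUnion (fun i _ j _ hij => Finset.pairwise_disjoint_powersetCard _ hij)] at h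
  rw [← h, Finset.card_univ]
  refine Finset.sum_congr rfl fun r _ => ?_
  rw [extTrace, Finset.mul_sum]
  exact Finset.sum_congr rfl fun S hS => by
    rw [Finset.mem_powersetCard_univ.mp hS]

lemma hookChar_add (σ : Equiv.Perm α) (k : ℕ) (hk1 : 1 ≤ k) (hkn : k ≤ Fintype.card α) :
    hookChar k σ + hookChar (k - 1) σ = extTrace (Fintype.card α - k + 1) σ := by
  by_cases hk2 : 2 ≤ k
  · simp only [hookChar, if_pos (And.intro hk1 hkn),
      if_pos (And.intro (by omega : 1 ≤ k - 1) (by omega : k - 1 ≤ Fintype.card α))]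
    have e1 : Fintype.card α - (k - 1) + 1 = (Fintype.card α - k + 1) + 1 := by omega
    rw [e1]
    nth_rewrite 2 [Finset.sum_range_succ]
    have e2 : Fintype.card α - (k - 1) - (Fintype.card α - k + 1) = 0 := by omega
    rw [e2, pow_zero, one_mul]
    have hAB : (∑ r ∈ Finset.range (Fintype.card α - k + 1),
          (-1:ℤ) ^ (Fintype.card α - k - r) * extTrace r σ)
        + ∑ r ∈ Finset.range (Fintype.card α - k + 1),
          (-1:ℤ) ^ (Fintype.card α - (k - 1) - r) * extTrace r σ = 0 := by
      rw [← Finset.sum_add_distrib]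
      refine Finset.sum_eq_zero fun r hr => ?_
      have hr' : r < Fintype.card α - k + 1 := Finset.mem_range.mp hr
      have e3 : Fintype.card α - (k - 1) - r = (Fintype.card α - k - r) + 1 := by omega
      rw [e3, pow_succ]
      ring
    linarith [hAB]
  · have hk : k = 1 := by omega
    subst hk
    have hcard : 1 ≤ Fintype.card α := hkn
    have : Nonempty α := Fintype.card_pos_iff.mp (by omega)
    have hn1 : Fintype.card α - 1 + 1 = Fintype.card α := by omega
    simp only [hookChar, if_pos (And.intro le_rfl hkn), if_neg (by omega : ¬(1 ≤ 1 - 1 ∧ 1 - 1 ≤ Fintype.card α)), add_zero, hn1]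
    have hA := alt_sum_extTrace (α := α) σ
    rw [Finset.sum_range_succ] at hA
    have hpow : ∀ r, r < Fintype.card α →
        (-1:ℤ) ^ (Fintype.card α - 1 - r) = (-1) ^ (Fintype.card α - 1) * (-1) ^ r := by
      intro r hr
      have h1 : (-1:ℤ) ^ (Fintype.card α - 1 - r) * (-1) ^ r = (-1) ^ (Fintype.card α - 1) :=
        pow_sub_mul_pow (-1) (by omega)
      have h2 : ((-1:ℤ) ^ r) * ((-1) ^ r) = 1 := by
        rw [← pow_add]
        exact Even.neg_one_pow ⟨r, rfl⟩
      calc (-1:ℤ) ^ (Fintype.card α - 1 - r)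
          = (-1) ^ (Fintype.card α - 1 - r) * ((-1) ^ r * (-1) ^ r) := by rw [h2, mul_one]
        _ = (-1) ^ (Fintype.card α - 1) * (-1) ^ r := by rw [← mul_assoc, h1]
    have hstep : ∑ r ∈ Finset.range (Fintype.card α), (-1:ℤ) ^ (Fintype.card α - 1 - r) * extTrace r σ
        = (-1:ℤ) ^ (Fintype.card α - 1) * ∑ r ∈ Finset.range (Fintype.card α), (-1) ^ r * extTrace r σ := by
      rw [Finset.mul_sum]
      exact Finset.sum_congr rfl fun r hr => by
        rw [hpow r (Finset.mem_range.mp hr), mul_assoc]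
    rw [hstep]
    have h0 : ∑ r ∈ Finset.range (Fintype.card α), (-1:ℤ) ^ r * extTrace r σ
        = -((-1) ^ Fintype.card α * extTrace (Fintype.card α) σ) := by linarith [hA]
    rw [h0]
    have hmul : (-1:ℤ) ^ (Fintype.card α - 1) * ((-1) ^ Fintype.card α) = -1 := by
      rw [← pow_add]
      exact Odd.neg_one_pow ⟨Fintype.card α - 1, by omega⟩
    rw [mul_neg, ← mul_assoc, hmul]
    ring

lemma restSign_eq_sign (σ : Equiv.Perm α) (T : Finset α) (h : ∀ x, x ∈ T ↔ σ x ∈ T)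
    (τ : Equiv.Perm T) (hτ : ∀ x (hx : x ∈ T), σ x = ↑(τ ⟨x, hx⟩)) :
    restSign σ T = Equiv.Perm.sign τ := by
  rw [restSign, dif_pos h]
  have heq : σ.subtypePerm (p := fun x => x ∈ T) (fun x => (h x).symm) = τ := by
    apply Equiv.ext
    intro x
    apply Subtype.ext
    rw [Equiv.Perm.subtypePerm_apply]
    exact hτ x x.2
  rw [heq]

lemma perM_det_decomp (B : Matrix α α ℂ) (S : Finset α) :
    perM (subMat B S) * (subMat B Sᶜ).det
      = ∑ σ : Equiv.Perm α, ((restSign σ Sᶜ : ℤ) : ℂ) * ∏ i, B i (σ i) := by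
  classical
  have hsplit : ∑ σ : Equiv.Perm α, ((restSign σ Sᶜ : ℤ) : ℂ) * ∏ i, B i (σ i)
      = ∑ σ ∈ Finset.univ.filter (fun σ : Equiv.Perm α => ∀ x, x ∈ Sᶜ ↔ σ x ∈ Sᶜ),
          ((restSign σ Sᶜ : ℤ) : ℂ) * ∏ i, B i (σ i) := by
    symm
    apply Finset.sum_subset (Finset.filter_subset _ _)
    intro σ _ hσ
    rw [Finset.mem_filter, not_and] at hσ
    rw [restSign, dif_neg (hσ (Finset.mem_univ σ))]
    simp
  rw [hsplit]
  -- expand the determinant in row form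
  have hdet : (subMat B Sᶜ).det = ∑ τ : Equiv.Perm (Sᶜ : Finset α),
      ((Equiv.Perm.sign τ : ℤ) : ℂ) * ∏ i, subMat B Sᶜ i (τ i) := by
    rw [← Matrix.det_transpose, Matrix.det_apply']
    simp only [Matrix.transpose_apply]
  rw [perM, hdet, Finset.sum_mul_sum, ← Finset.sum_product', Finset.univ_product_univ]
  -- the gluing map
  set F : Equiv.Perm (S : Finset α) × Equiv.Perm (Sᶜ : Finset α) → Equiv.Perm α :=
    fun p => Equiv.Perm.ofSubtype p.1 * Equiv.Perm.ofSubtype p.2 with hF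
  have hFS : ∀ p (x : α) (hx : x ∈ S), F p x = ↑(p.1 ⟨x, hx⟩) := by
    intro p x hx
    rw [hF]
    simp only [Equiv.Perm.mul_apply]
    rw [Equiv.Perm.ofSubtype_apply_of_not_mem p.2 (by simp [hx]),
      Equiv.Perm.ofSubtype_apply_of_mem p.1 hx]
  have hFSc : ∀ p (x : α) (hx : x ∈ Sᶜ), F p x = ↑(p.2 ⟨x, hx⟩) := by
    intro p x hx
    rw [hF]
    simp only [Equiv.Perm.mul_apply]
    rw [Equiv.Perm.ofSubtype_apply_of_mem p.2 hx,
      Equiv.Perm.ofSubtype_apply_of_not_mem p.1 (Finset.mem_compl.mp (p.2 ⟨x, hx⟩).2)]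
  have hFinv : ∀ p (x : α), x ∈ Sᶜ ↔ F p x ∈ Sᶜ := by
    intro p x
    constructor
    · intro hx
      rw [hFSc p x hx]
      exact (p.2 ⟨x, hx⟩).2
    · intro hx
      by_contra hxS
      have hxS' : x ∈ S := by simpa using hxS
      rw [hFS p x hxS'] at hx
      exact (Finset.mem_compl.mp hx) (p.1 ⟨x, hxS'⟩).2
  refine Finset.sum_bij' (fun p _ => F p)
    (fun σ hσ => (σ.subtypePerm (fun x => ((inv_compl_iff σ S).mp
        (by simpa using (Finset.mem_filter.mp hσ).2) x).symm),
      σ.subtypePerm (fun x => ((by simpa using (Finset.mem_filter.mp hσ).2 :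
        ∀ x, x ∈ Sᶜ ↔ σ x ∈ Sᶜ) x).symm)))
    ?_ ?_ ?_ ?_ ?_
  · intro p _
    rw [Finset.mem_filter]
    exact ⟨Finset.mem_univ _, hFinv p⟩
  · intro σ hσ
    exact Finset.mem_univ _
  · intro p _
    ext x
    · simp only [Equiv.Perm.subtypePerm_apply]
      rw [hFS p ↑x x.2, Subtype.coe_eta]
    · simp only [Equiv.Perm.subtypePerm_apply]
      rw [hFSc p ↑x x.2, Subtype.coe_eta]
  · intro σ hσ
    apply Equiv.ext
    intro x
    by_cases hx : x ∈ S
    · rw [hFS _ x hx, Equiv.Perm.subtypePerm_apply]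
    · rw [hFSc _ x (Finset.mem_compl.mpr hx), Equiv.Perm.subtypePerm_apply]
  · intro p _
    have hsign : restSign (F p) Sᶜ = Equiv.Perm.sign p.2 :=
      restSign_eq_sign (F p) Sᶜ (hFinv p) p.2 (fun x hx => hFSc p x hx)
    rw [hsign]
    have hprod : ∏ i, B i (F p i) = (∏ i ∈ S, B i (F p i)) * ∏ i ∈ Sᶜ, B i (F p i) :=
      (Finset.prod_mul_prod_compl S _).symm
    have hprodS : ∏ i ∈ S, B i (F p i) = ∏ i, subMat B S i (p.1 i) := by
      rw [Finset.univ_eq_attach, ← Finset.prod_attach S (fun i => B i (F p i))]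
      refine Finset.prod_congr rfl fun x _ => ?_
      show B ↑x (F p ↑x) = B ↑x ↑(p.1 x)
      rw [hFS p ↑x x.2, Subtype.coe_eta]
    have hprodSc : ∏ i ∈ Sᶜ, B i (F p i) = ∏ i, subMat B Sᶜ i (p.2 i) := by
      rw [Finset.univ_eq_attach, ← Finset.prod_attach Sᶜ (fun i => B i (F p i))]
      refine Finset.prod_congr rfl fun x _ => ?_
      show B ↑x (F p ↑x) = B ↑x ↑(p.2 x)
      rw [hFSc p ↑x x.2, Subtype.coe_eta]
    rw [hprod, hprodS, hprodSc]
    ring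

/-- the recursion `d_k(B) = Σ_{α ∈ Q_{k−1,n}} per(B[α])·det(B(α)) − d_{k−1}(B)`. -/
theorem hookImmanant_recursion (n k : ℕ) (hk1 : 1 ≤ k) (hkn : k ≤ n)
    (B : Matrix (Fin n) (Fin n) ℂ) :
    dImm k B =
      (∑ S ∈ Finset.univ.powersetCard (k - 1), perM (subMat B S) * (subMat B Sᶜ).det)
        - dImm (k - 1) B := by
  rw [eq_sub_iff_add_eq]
  have hcard : Fintype.card (Fin n) = n := Fintype.card_fin n
  have hsum : dImm k B + dImm (k - 1) B
      = ∑ σ : Equiv.Perm (Fin n), ((extTrace (n - k + 1) σ : ℤ) : ℂ) * ∏ i, B i (σ i) := by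
    rw [dImm, dImm, ← Finset.sum_add_distrib]
    refine Finset.sum_congr rfl fun σ _ => ?_
    have hCA := hookChar_add σ k hk1 (by rw [hcard]; exact hkn)
    rw [hcard] at hCA
    rw [← add_mul, ← Int.cast_add, hCA]
  rw [hsum]
  have hstep : ∀ σ : Equiv.Perm (Fin n),
      ((extTrace (n - k + 1) σ : ℤ) : ℂ) * ∏ i, B i (σ i)
      = ∑ T ∈ Finset.univ.powersetCard (n - k + 1),
          ((restSign σ T : ℤ) : ℂ) * ∏ i, B i (σ i) := by
    intro σ
    rw [extTrace, Int.cast_sum, Finset.sum_mul]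
  rw [Finset.sum_congr rfl fun σ _ => hstep σ, Finset.sum_comm]
  symm
  refine Finset.sum_nbij' (fun S => Sᶜ) (fun T => Tᶜ) ?_ ?_ ?_ ?_ ?_
  · intro S hS
    rw [Finset.mem_powersetCard_univ] at hS ⊢
    rw [Finset.card_compl, hcard, hS]
    omega
  · intro T hT
    rw [Finset.mem_powersetCard_univ] at hT ⊢
    rw [Finset.card_compl, hcard, hT]
    omega
  · intro S _
    exact compl_compl S
  · intro T _
    exact compl_compl T
  · intro S _
    exact perM_det_decomp B S
end

section
/- Let G⃗ be a digraph with n vertices and m arcs (no loops or parallel arcs), A its adjacency matrix, and Φ_k^A(G⃗,x) = d_{(k,1^{n−k})}(xI_n − A(G⃗)) its hook immanantal polynomial. Then (m − n)·Φ_k^A(G⃗,x) + x·(Φ_k^A)'(G⃗,x) = Σ_{e⃗ ∈ E(G⃗)} Φ_k^A(G⃗ − e⃗, x), where G⃗ − e⃗ is obtained by deleting arc e⃗. -/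
open Finset Matrix Polynomial BigOperators

variable {α : Type*} [Fintype α] [DecidableEq α]

/-- The adjacency matrix of the digraph on `Fin n` with arc set `E`. -/
def adjM (n : ℕ) (E : Finset (Fin n × Fin n)) : Matrix (Fin n) (Fin n) ℂ :=
  fun i j => if (i, j) ∈ E then 1 else 0

/-- The in-degree of vertex `v` in the digraph with arc set `E`. -/
def inDeg (n : ℕ) (E : Finset (Fin n × Fin n)) (v : Fin n) : ℕ :=
  (E.filter (fun e => e.2 = v)).card

/-- The diagonal in-degree matrix of the digraph with arc set `E`. -/
def degM (n : ℕ) (E : Finset (Fin n × Fin n)) : Matrix (Fin n) (Fin n) ℂ :=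
  Matrix.diagonal (fun v => (inDeg n E v : ℂ))

/-- The Laplacian matrix `L = D - A` of the digraph with arc set `E`. -/
def lapM (n : ℕ) (E : Finset (Fin n × Fin n)) : Matrix (Fin n) (Fin n) ℂ :=
  degM n E - adjM n E

/-- The signless Laplacian matrix `Q = D + A` of the digraph with arc set `E`. -/
def qM (n : ℕ) (E : Finset (Fin n × Fin n)) : Matrix (Fin n) (Fin n) ℂ :=
  degM n E + adjM n E

lemma charm_diag (n : ℕ) (E : Finset (Fin n × Fin n)) (hloop : ∀ e ∈ E, e.1 ≠ e.2)
    (i : Fin n) : charmatrix (adjM n E) i i = X := by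
  rw [charmatrix_apply_eq]
  have : (i, i) ∉ E := fun hm => (hloop _ hm) rfl
  simp [adjM, this]

lemma charm_off (n : ℕ) (E : Finset (Fin n × Fin n)) {i j : Fin n} (h : i ≠ j) :
    charmatrix (adjM n E) i j = if (i, j) ∈ E then -1 else 0 := by
  rw [charmatrix_apply_ne _ _ _ h]
  unfold adjM
  split <;> simp

lemma xdx (f : ℕ) : (X : Polynomial ℂ) * derivative (X ^ f) = C (f : ℂ) * X ^ f := by
  cases f with
  | zero => simp
  | succ f =>
      rw [derivative_X_pow]
      push_cast
      ring

lemma key (n : ℕ) (E : Finset (Fin n × Fin n)) (hloop : ∀ e ∈ E, e.1 ≠ e.2)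
    (σ : Equiv.Perm (Fin n)) :
    C ((E.card : ℂ) - n) * (∏ i, charmatrix (adjM n E) i (σ i))
      + X * derivative (∏ i, charmatrix (adjM n E) i (σ i))
    = ∑ e ∈ E, ∏ i, charmatrix (adjM n (E.erase e)) i (σ i) := by
  by_cases h : ∀ i : Fin n, σ i ≠ i → (i, σ i) ∈ E
  · set F := Finset.univ.filter (fun i : Fin n => σ i = i) with hF
    set f := F.card with hf
    have hfn : f ≤ n := by
      calc f ≤ Finset.univ.card := Finset.card_filter_le _ _
      _ = n := by simp
    have hcardnot : (Finset.univ.filter (fun i : Fin n => ¬ σ i = i)).card = n - f := by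
      have h0 := Finset.card_filter_add_card_filter_not
        (s := (Finset.univ : Finset (Fin n))) (p := fun i => σ i = i)
      simp only [Finset.card_univ, Fintype.card_fin] at h0
      have hfc : (Finset.univ.filter (fun i : Fin n => σ i = i)).card = f := by
        rw [hf, hF]
      omega
    have hprod : (∏ i, charmatrix (adjM n E) i (σ i))
        = C ((-1 : ℂ) ^ (n - f)) * X ^ f := by
      rw [← Finset.prod_filter_mul_prod_filter_not Finset.univ (fun i => σ i = i)]
      have h1 : ∏ i ∈ F, charmatrix (adjM n E) i (σ i) = X ^ f := by
        have hfac : ∀ i ∈ F, charmatrix (adjM n E) i (σ i) = X := by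
          intro i hi
          have hi' : σ i = i := (Finset.mem_filter.mp hi).2
          rw [hi', charm_diag n E hloop]
        rw [Finset.prod_congr rfl hfac, Finset.prod_const]
      have h2 : ∏ i ∈ Finset.univ.filter (fun i : Fin n => ¬ σ i = i),
          charmatrix (adjM n E) i (σ i) = C ((-1 : ℂ) ^ (n - f)) := by
        have hfac : ∀ i ∈ Finset.univ.filter (fun i : Fin n => ¬ σ i = i),
            charmatrix (adjM n E) i (σ i) = -1 := by
          intro i hi
          have hi' : σ i ≠ i := (Finset.mem_filter.mp hi).2
          rw [charm_off n E (Ne.symm hi'), if_pos (h i hi')]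
        rw [Finset.prod_congr rfl hfac, Finset.prod_const, hcardnot]
        simp
      rw [h1, h2]
      ring
    -- count arcs used by σ
    have hsetE : E.filter (fun e => σ e.1 = e.2)
        = (Finset.univ.filter (fun i : Fin n => ¬ σ i = i)).image (fun i => (i, σ i)) := by
      ext e
      simp only [Finset.mem_filter, Finset.mem_image, Finset.mem_univ, true_and]
      constructor
      · rintro ⟨heE, hσe⟩
        refine ⟨e.1, ?_, ?_⟩
        · intro hfix
          exact hloop e heE (by rw [← hσe, hfix])
        · rw [hσe]
      · rintro ⟨i, hi, rfl⟩
        exact ⟨h i hi, rfl⟩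
    have hcard1 : (E.filter (fun e => σ e.1 = e.2)).card = n - f := by
      rw [hsetE, Finset.card_image_of_injective _ (fun a b hab => congrArg Prod.fst hab),
        hcardnot]
    have hle : n - f ≤ E.card := by
      rw [← hcard1]; exact Finset.card_filter_le _ _
    -- RHS
    have hRHS : ∑ e ∈ E, ∏ i, charmatrix (adjM n (E.erase e)) i (σ i)
        = (E.card - (n - f)) • (C ((-1 : ℂ) ^ (n - f)) * X ^ f) := by
      rw [← Finset.sum_filter_add_sum_filter_not E (fun e => σ e.1 = e.2)]
      have hz : ∑ e ∈ E.filter (fun e => σ e.1 = e.2),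
          ∏ i, charmatrix (adjM n (E.erase e)) i (σ i) = 0 := by
        refine Finset.sum_eq_zero fun e he => ?_
        obtain ⟨heE, hσe⟩ := Finset.mem_filter.mp he
        refine Finset.prod_eq_zero (Finset.mem_univ e.1) ?_
        have hne : e.1 ≠ σ e.1 := by
          rw [hσe]; exact hloop e heE
        rw [charm_off n (E.erase e) hne, if_neg, ]
        intro hmem
        have : (e.1, σ e.1) = e := by rw [hσe]
        rw [this] at hmem
        exact (Finset.mem_erase.mp hmem).1 rfl
      have hsame : ∀ e ∈ E.filter (fun e => ¬ σ e.1 = e.2),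
          ∏ i, charmatrix (adjM n (E.erase e)) i (σ i)
            = C ((-1 : ℂ) ^ (n - f)) * X ^ f := by
        intro e he
        obtain ⟨heE, hσe⟩ := Finset.mem_filter.mp he
        rw [← hprod]
        refine Finset.prod_congr rfl fun i _ => ?_
        by_cases hfix : σ i = i
        · have hloop' : ∀ e' ∈ E.erase e, e'.1 ≠ e'.2 :=
            fun e' he' => hloop e' (Finset.mem_of_mem_erase he')
          rw [hfix, charm_diag n (E.erase e) hloop', charm_diag n E hloop]
        · have hmem : (i, σ i) ∈ E.erase e := by
            refine Finset.mem_erase.mpr ⟨?_, h i hfix⟩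
            intro heq
            apply hσe
            rw [← heq]
          rw [charm_off n (E.erase e) (Ne.symm hfix), charm_off n E (Ne.symm hfix),
            if_pos hmem, if_pos (h i hfix)]
      rw [hz, zero_add, Finset.sum_congr rfl hsame, Finset.sum_const]
      congr 1
      have := Finset.card_filter_add_card_filter_not (s := E)
        (p := fun e => σ e.1 = e.2)
      omega
    have hcast : ((E.card - (n - f) : ℕ) : Polynomial ℂ)
        = C ((E.card : ℂ) - (n : ℂ) + (f : ℂ)) := by
      rw [← map_natCast (C : ℂ →+* Polynomial ℂ)]
      congr 1
      push_cast [Nat.cast_sub hle, Nat.cast_sub hfn]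
      ring
    rw [hprod, hRHS, derivative_C_mul, nsmul_eq_mul, mul_left_comm X, xdx, hcast]
    simp only [map_sub, map_add]
    ring
  · push_neg at h
    obtain ⟨i0, hi0ne, hi0E⟩ := h
    have hP : (∏ i, charmatrix (adjM n E) i (σ i)) = 0 := by
      refine Finset.prod_eq_zero (Finset.mem_univ i0) ?_
      rw [charm_off n E (Ne.symm hi0ne), if_neg hi0E]
    have hPe : ∀ e ∈ E, ∏ i, charmatrix (adjM n (E.erase e)) i (σ i) = 0 := by
      intro e _
      refine Finset.prod_eq_zero (Finset.mem_univ i0) ?_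
      rw [charm_off n (E.erase e) (Ne.symm hi0ne),
        if_neg (fun hm => hi0E (Finset.mem_of_mem_erase hm))]
    rw [hP, Finset.sum_congr rfl hPe]
    simp

/-- for a digraph with `n` vertices and `m` arcs (no loops),
`(m − n)·Φ_k^A(G,x) + x·Φ_k'^A(G,x) = Σ_{e ∈ E} Φ_k^A(G − e, x)`. -/
theorem digraph_adjacency_hookPoly_identity (n k : ℕ) (hk1 : 1 ≤ k) (hkn : k ≤ n)
    (E : Finset (Fin n × Fin n)) (hloop : ∀ e ∈ E, e.1 ≠ e.2) :
    C ((E.card : ℂ) - n) * hookPoly k (adjM n E)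
        + X * derivative (hookPoly k (adjM n E))
      = ∑ e ∈ E, hookPoly k (adjM n (E.erase e)) := by
  unfold hookPoly dImm
  rw [map_sum derivative, Finset.mul_sum, Finset.mul_sum, Finset.sum_comm,
    ← Finset.sum_add_distrib]
  refine Finset.sum_congr rfl fun σ _ => ?_
  have hC : ((hookChar k σ : ℤ) : Polynomial ℂ) = C ((hookChar k σ : ℤ) : ℂ) := by
    rw [← map_intCast (C : ℂ →+* Polynomial ℂ)]
  rw [hC, derivative_C_mul, ← Finset.mul_sum, ← key n E hloop σ]
  ring
end

section
/- Let G⃗ be a digraph with n vertices and m arcs, Q(G⃗) = D(G⃗) + A(G⃗) its signless Laplacian matrix. Then the hook immanantal polynomial Φ_k^Q(G⃗,x) = d_{(k,1^{n−k})}(xI_n − Q(G⃗)) satisfies (m − n)·Φ_k^Q(G⃗,x) + x·(Φ_k^Q)'(G⃗,x) = Σ_{e⃗ ∈ E(G⃗)} Φ_k^Q(G⃗ − e⃗, x). -/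
open Finset Matrix Polynomial BigOperators

variable {α : Type*} [Fintype α] [DecidableEq α]

section AuxProof
variable {R : Type*} [CommRing R]

private lemma derivFinsetProd {ι : Type*} [DecidableEq ι] (s : Finset ι) (f : ι → Polynomial R) :
    derivative (∏ i ∈ s, f i) = ∑ i ∈ s, (∏ j ∈ s.erase i, f j) * derivative (f i) := by
  rw [Finset.prod_eq_multiset_prod, Polynomial.derivative_prod, Finset.sum_eq_multiset_sum]
  congr 1

/-- The immanant cofactor: `dImm` of `B` with column `j` replaced by the indicator of `i`. -/
def cofD (k : ℕ) (B : Matrix α α R) (i j : α) : R :=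
  dImm k (B.updateCol j (Pi.single i 1))

private lemma prod_updateColumn (B : Matrix α α R) (j : α) (c : α → R) (σ : Equiv.Perm α) :
    ∏ s, (B.updateCol j c) s (σ s)
      = c (σ⁻¹ j) * ∏ s ∈ Finset.univ.erase (σ⁻¹ j), B s (σ s) := by
  rw [← Finset.mul_prod_erase Finset.univ _ (Finset.mem_univ (σ⁻¹ j))]
  congr 1
  · simp [Matrix.updateCol_apply]
  · refine Finset.prod_congr rfl fun s hs => ?_
    rw [Matrix.updateCol_apply, if_neg]
    intro h
    exact (Finset.mem_erase.mp hs).1 (by rw [← h]; simp)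

private lemma dImm_updateColumn (k : ℕ) (B : Matrix α α R) (j : α) (c : α → R) :
    dImm k (B.updateCol j c) = ∑ i, c i * cofD k B i j := by
  unfold cofD dImm
  simp only [prod_updateColumn, Finset.mul_sum]
  rw [Finset.sum_comm]
  refine Finset.sum_congr rfl fun σ _ => ?_
  rw [Finset.sum_eq_single (σ⁻¹ j)]
  · simp [Pi.single_apply]; ring
  · intro i _ hi
    rw [Equiv.Perm.inv_def] at hi
    simp [Pi.single_apply, Ne.symm hi]
  · simp

private lemma dImm_eq_col (k : ℕ) (B : Matrix α α R) (j : α) :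
    dImm k B = ∑ i, B i j * cofD k B i j := by
  conv_lhs => rw [← Matrix.updateCol_eq_self B j]
  exact dImm_updateColumn k B j _

private lemma charmatrix_apply' (M : Matrix α α R) (i j : α) :
    charmatrix M i j = (if i = j then X else 0) - C (M i j) := by
  by_cases h : i = j
  · subst h; rw [charmatrix_apply_eq, if_pos rfl]
  · rw [charmatrix_apply_ne _ _ _ h, if_neg h]; ring

private lemma derivative_dImm_charmatrix (k : ℕ) (B : Matrix α α R) :
    derivative (dImm k (charmatrix B)) = ∑ j, cofD k (charmatrix B) j j := by
  unfold cofD dImm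
  simp only [prod_updateColumn]
  rw [map_sum]
  conv_rhs => rw [Finset.sum_comm]
  refine Finset.sum_congr rfl fun σ _ => ?_
  rw [derivative_mul, derivative_intCast, zero_mul, zero_add, derivFinsetProd, Finset.mul_sum]
  refine Finset.sum_congr rfl fun i _ => ?_
  by_cases h : σ i = i
  · have h1 : σ⁻¹ i = i := Equiv.Perm.inv_eq_iff_eq.mpr h.symm
    rw [h, charmatrix_apply_eq, h1]
    simp [Pi.single_apply]
  · have h1 : σ⁻¹ i ≠ i := fun hc => h (Equiv.Perm.inv_eq_iff_eq.mp hc).symm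
    rw [charmatrix_apply_ne _ _ _ (Ne.symm h)]
    rw [Equiv.Perm.inv_def] at h1
    simp [Pi.single_apply, h1]

end AuxProof

private lemma qM_erase_col (n : ℕ) (E : Finset (Fin n × Fin n)) (e : Fin n × Fin n)
    (he : e ∈ E) (i : Fin n) :
    qM n (E.erase e) i e.2
      = qM n E i e.2 - (if i = e.1 then 1 else 0) - (if i = e.2 then 1 else 0) := by
  have hdeg : (inDeg n (E.erase e) e.2 : ℂ) = (inDeg n E e.2 : ℂ) - 1 := by
    unfold inDeg
    have hmem2 : e ∈ E.filter (fun x => x.2 = e.2) := Finset.mem_filter.mpr ⟨he, rfl⟩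
    rw [Finset.filter_erase, Finset.card_erase_of_mem hmem2]
    have hpos : 1 ≤ (E.filter (fun x => x.2 = e.2)).card :=
      Finset.card_pos.mpr ⟨e, Finset.mem_filter.mpr ⟨he, rfl⟩⟩
    rw [Nat.cast_sub hpos, Nat.cast_one]
  have hadj : (if (i, e.2) ∈ E.erase e then (1:ℂ) else 0)
      = (if (i, e.2) ∈ E then (1:ℂ) else 0) - (if i = e.1 then 1 else 0) := by
    by_cases hi : i = e.1
    · subst hi
      have h1 : ((e.1, e.2) : Fin n × Fin n) = e := rfl
      rw [if_pos rfl, if_neg (fun hc => (Finset.mem_erase.mp hc).1 h1), h1, if_pos he]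
      ring
    · have h2 : ((i, e.2) : Fin n × Fin n) ≠ e := fun hc => hi (congrArg Prod.fst hc)
      rw [if_neg hi, sub_zero]
      by_cases hm : (i, e.2) ∈ E
      · rw [if_pos hm, if_pos (Finset.mem_erase.mpr ⟨h2, hm⟩)]
      · rw [if_neg hm, if_neg (fun hc => hm (Finset.mem_erase.mp hc).2)]
  unfold qM degM
  simp only [Matrix.add_apply]
  unfold adjM
  simp only [Matrix.diagonal_apply, hadj]
  by_cases hie : i = e.2
  · subst hie
    rw [if_pos rfl, if_pos rfl, if_pos rfl, hdeg]
    ring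
  · rw [if_neg hie, if_neg hie, if_neg hie]
    ring

private lemma qM_erase_ne (n : ℕ) (E : Finset (Fin n × Fin n)) (e : Fin n × Fin n)
    (i j : Fin n) (hj : j ≠ e.2) :
    qM n (E.erase e) i j = qM n E i j := by
  have hdeg : inDeg n (E.erase e) j = inDeg n E j := by
    unfold inDeg
    rw [Finset.filter_erase, Finset.erase_eq_of_notMem]
    intro hc
    exact hj ((Finset.mem_filter.mp hc).2).symm
  have hmem : ((i, j) ∈ E.erase e) = ((i, j) ∈ E) := by
    apply propext
    rw [Finset.mem_erase]
    constructor
    · exact And.right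
    · exact fun h => ⟨fun hc => hj (congrArg Prod.snd hc), h⟩
  unfold qM degM
  simp only [Matrix.add_apply]
  unfold adjM
  simp only [Matrix.diagonal_apply, hmem]
  by_cases hij : i = j
  · subst hij
    rw [hdeg]
  · rw [if_neg hij, if_neg hij]

private lemma charmatrix_qM_erase (n : ℕ) (E : Finset (Fin n × Fin n)) (e : Fin n × Fin n)
    (he : e ∈ E) :
    charmatrix (qM n (E.erase e)) = (charmatrix (qM n E)).updateCol e.2
      (fun i => charmatrix (qM n E) i e.2
        + C (if i = e.1 then (1:ℂ) else 0) + C (if i = e.2 then (1:ℂ) else 0)) := by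
  ext i j
  rw [Matrix.updateCol_apply]
  by_cases hj : j = e.2
  · rw [if_pos hj]
    subst hj
    rw [charmatrix_apply', charmatrix_apply', qM_erase_col n E e he i, map_sub, map_sub]
    ring
  · rw [if_neg hj, charmatrix_apply', charmatrix_apply', qM_erase_ne n E e i j hj]

private lemma hookPoly_erase (n k : ℕ) (E : Finset (Fin n × Fin n)) (e : Fin n × Fin n)
    (he : e ∈ E) :
    hookPoly k (qM n (E.erase e)) = hookPoly k (qM n E)
      + cofD k (charmatrix (qM n E)) e.1 e.2 + cofD k (charmatrix (qM n E)) e.2 e.2 := by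
  unfold hookPoly
  rw [charmatrix_qM_erase n E e he, dImm_updateColumn]
  simp only [add_mul, Finset.sum_add_distrib]
  congr 1
  congr 1
  · exact (dImm_eq_col k _ e.2).symm
  · simp [apply_ite C, ite_mul, Finset.sum_ite_eq']
  · simp [apply_ite C, ite_mul, Finset.sum_ite_eq']

/-- for a digraph with `n` vertices and `m` arcs (no loops),
`(m − n)·Φ_k^Q(G,x) + x·Φ_k'^Q(G,x) = Σ_{e ∈ E} Φ_k^Q(G − e, x)`. -/
theorem digraph_signless_laplacian_hookPoly_identity (n k : ℕ) (hk1 : 1 ≤ k) (hkn : k ≤ n)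
    (E : Finset (Fin n × Fin n)) (hloop : ∀ e ∈ E, e.1 ≠ e.2) :
    C ((E.card : ℂ) - n) * hookPoly k (qM n E)
        + X * derivative (hookPoly k (qM n E))
      = ∑ e ∈ E, hookPoly k (qM n (E.erase e)) := by
  classical
  have hder : derivative (hookPoly k (qM n E)) = ∑ j, cofD k (charmatrix (qM n E)) j j :=
    derivative_dImm_charmatrix k (qM n E)
  set Mc := charmatrix (qM n E) with hMc
  set Q := qM n E with hQ
  -- column expansion of the immanant
  have hcol : ∀ j, dImm k Mc
      = X * cofD k Mc j j - ∑ i, C (Q i j) * cofD k Mc i j := by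
    intro j
    rw [dImm_eq_col k Mc j,
      Finset.sum_congr rfl (fun i _ => by rw [hMc, charmatrix_apply' Q i j])]
    simp only [sub_mul, ite_mul, zero_mul, Finset.sum_sub_distrib, Finset.sum_ite_eq',
      Finset.mem_univ, if_pos]
    rw [← hMc]
  have hsum : (n : Polynomial ℂ) * dImm k Mc
      = X * (∑ j, cofD k Mc j j) - ∑ j, ∑ i, C (Q i j) * cofD k Mc i j := by
    calc (n : Polynomial ℂ) * dImm k Mc = ∑ _j : Fin n, dImm k Mc := by
          rw [Finset.sum_const, Finset.card_univ, Fintype.card_fin, nsmul_eq_mul]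
      _ = ∑ j, (X * cofD k Mc j j - ∑ i, C (Q i j) * cofD k Mc i j) :=
          Finset.sum_congr rfl fun j _ => hcol j
      _ = _ := by rw [Finset.sum_sub_distrib, Finset.mul_sum]
  -- splitting the Q-weighted cofactor sum into adjacency and degree parts
  have hdegpart : ∑ j, ∑ i, C (degM n E i j) * cofD k Mc i j
      = ∑ e ∈ E, cofD k Mc e.2 e.2 := by
    rw [← Finset.sum_fiberwise E (fun e => e.2) (fun e => cofD k Mc e.2 e.2)]
    refine Finset.sum_congr rfl fun j _ => ?_
    have h1 : ∑ i, C (degM n E i j) * cofD k Mc i j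
        = C ((inDeg n E j : ℂ)) * cofD k Mc j j := by
      unfold degM
      simp only [Matrix.diagonal_apply, apply_ite C, map_zero, ite_mul, zero_mul,
        Finset.sum_ite_eq', Finset.mem_univ, if_pos]
    rw [h1]
    rw [Finset.sum_congr rfl (fun e he' => by rw [(Finset.mem_filter.mp he').2]),
      Finset.sum_const, nsmul_eq_mul]
    unfold inDeg
    rw [← Polynomial.C_eq_natCast]
  have hadjpart : ∑ j, ∑ i, C (adjM n E i j) * cofD k Mc i j
      = ∑ e ∈ E, cofD k Mc e.1 e.2 := by
    rw [Finset.sum_comm, ← Finset.sum_product' Finset.univ Finset.univ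
      (fun i j => C (adjM n E i j) * cofD k Mc i j), Finset.univ_product_univ]
    unfold adjM
    simp only [apply_ite C, _root_.map_one, _root_.map_zero, ite_mul, one_mul, zero_mul]
    rw [Finset.sum_ite_mem, Finset.univ_inter]
  have hQsplit : ∑ j, ∑ i, C (Q i j) * cofD k Mc i j
      = (∑ e ∈ E, cofD k Mc e.1 e.2) + ∑ e ∈ E, cofD k Mc e.2 e.2 := by
    rw [← hadjpart, ← hdegpart, ← Finset.sum_add_distrib]
    refine Finset.sum_congr rfl fun j _ => ?_
    rw [← Finset.sum_add_distrib]
    refine Finset.sum_congr rfl fun i _ => ?_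
    rw [hQ]
    unfold qM
    rw [Matrix.add_apply, map_add]
    ring
  -- assemble
  rw [hder, Finset.sum_congr rfl (fun e he => hookPoly_erase n k E e he)]
  simp only [Finset.sum_add_distrib, Finset.sum_const, nsmul_eq_mul]
  have hC : C ((E.card : ℂ) - (n : ℂ)) = (E.card : Polynomial ℂ) - (n : Polynomial ℂ) := by
    rw [map_sub, Polynomial.C_eq_natCast, Polynomial.C_eq_natCast]
  rw [hC]
  have hΦ : hookPoly k Q = dImm k Mc := rfl
  rw [hΦ]
  linear_combination hQsplit - hsum
end
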